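/- Let n ≥ 2. For every flag (V,W) of type (2,2n−2) in ℝ^{2n} there exists an element (V′,W′) ∈ Λ such that (V,W) and (V′,W′) are NOT antipodal, i.e., V ⊕ W′ ≠ ℝ^{2n} or V′ ⊕ W ≠ ℝ^{2n}. In other words, the set Λ is a maximally antipodal subset of the space of flags of type (2,2n−2). -/

import Mathlib

open Matrix

noncomputable section

def I2 : Matrix (Fin 2) (Fin 2) ℝ := !![1, 0; 0, 1]
def Tm : Matrix (Fin 2) (Fin 2) ℝ := !![1, 0; 0, -1]
def Rm : Matrix (Fin 2) (Fin 2) ℝ := !![0, -1; 1, 0]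
def Pm : Matrix (Fin 2) (Fin 2) ℝ := !![0, 1; 1, 0]

/-- `c_k = √(k(n−k))`. -/
def cc (n k : ℕ) : ℝ := Real.sqrt (k * (n - k : ℕ))

/-- The 2n×2n matrix, viewed as an n×n array of 2×2 blocks, whose only nonzero blocks are
`B k` at superdiagonal block positions (k, k+1) for 1-based `k = 1,…,n−1`. -/
def blkSup (n : ℕ) (B : ℕ → Matrix (Fin 2) (Fin 2) ℝ) :
    Matrix (Fin (2*n)) (Fin (2*n)) ℝ :=
  Matrix.of fun r c =>
    if (c:ℕ)/2 = (r:ℕ)/2 + 1 then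
      B ((r:ℕ)/2 + 1) ⟨(r:ℕ) % 2, by omega⟩ ⟨(c:ℕ) % 2, by omega⟩
    else 0

/-- The matrix `X` for even `n`: superdiagonal blocks `c_k I₂` for `k < n/2`,
`c_{n/2} T` at `k = n/2`, and `−c_k I₂` for `k > n/2`. -/
def Xeven (n : ℕ) : Matrix (Fin (2*n)) (Fin (2*n)) ℝ :=
  blkSup n (fun k =>
    if k < n/2 then cc n k • I2
    else if k = n/2 then cc n (n/2) • Tm
    else -(cc n k) • I2)

/-- The matrix `Y` for even `n`: superdiagonal blocks `c_k R` for `k ≠ n/2` and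
`c_{n/2} P` at `k = n/2`. -/
def Yeven (n : ℕ) : Matrix (Fin (2*n)) (Fin (2*n)) ℝ :=
  blkSup n (fun k => if k = n/2 then cc n (n/2) • Pm else cc n k • Rm)

/-- The embedding of 2(n−1)×2(n−1) matrices into 2n×2n matrices that inserts two middle
rows and columns of zeros: in block form `[[A,B],[C,D]] ↦ [[A,0,B],[0,0,0],[C,0,D]]`. -/
def embMid (n : ℕ) (M : Matrix (Fin (2*(n-1))) (Fin (2*(n-1))) ℝ) :
    Matrix (Fin (2*n)) (Fin (2*n)) ℝ :=
  Matrix.of fun r c =>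
    if h : ((r:ℕ) < n - 1 ∨ n + 1 ≤ (r:ℕ)) ∧ ((c:ℕ) < n - 1 ∨ n + 1 ≤ (c:ℕ)) then
      M ⟨if (r:ℕ) < n - 1 then (r:ℕ) else (r:ℕ) - 2,
          by have := r.isLt; split_ifs <;> omega⟩
        ⟨if (c:ℕ) < n - 1 then (c:ℕ) else (c:ℕ) - 2,
          by have := c.isLt; split_ifs <;> omega⟩
    else 0

/-- The matrix `X`: for `n` even it is `Xeven n`; for `n` odd it is obtained from
`Xeven (n−1)` by inserting two middle rows and columns of zeros. -/
def Xmat (n : ℕ) : Matrix (Fin (2*n)) (Fin (2*n)) ℝ :=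
  if Even n then Xeven n else embMid n (Xeven (n-1))

/-- The matrix `Y`, defined analogously to `Xmat`. -/
def Ymat (n : ℕ) : Matrix (Fin (2*n)) (Fin (2*n)) ℝ :=
  if Even n then Yeven n else embMid n (Yeven (n-1))

/-- `M_{α,β} = exp(αX + βY)` (matrix exponential). -/
def Mmat (n : ℕ) (α β : ℝ) : Matrix (Fin (2*n)) (Fin (2*n)) ℝ :=
  NormedSpace.exp (α • Xmat n + β • Ymat n)

/-- Span of standard basis vectors with (0-based) indices in `s`. -/
def stdSpan (n : ℕ) (s : Set ℕ) : Submodule ℝ (Fin (2*n) → ℝ) :=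
  Submodule.span ℝ { x | ∃ i : Fin (2*n), (i:ℕ) ∈ s ∧ x = Pi.single i 1 }

/-- `V₋ = span{e_{2n−1}, e_{2n}}` (1-based indices). -/
def Vminus (n : ℕ) : Submodule ℝ (Fin (2*n) → ℝ) := stdSpan n { i | 2*n - 2 ≤ i }
/-- `W₋ = span{e₃,…,e_{2n}}` (1-based indices). -/
def Wminus (n : ℕ) : Submodule ℝ (Fin (2*n) → ℝ) := stdSpan n { i | 2 ≤ i }
/-- `V₊ = span{e₁, e₂}` (1-based indices). -/
def Vplus (n : ℕ) : Submodule ℝ (Fin (2*n) → ℝ) := stdSpan n { i | i < 2 }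
/-- `W₊ = span{e₁,…,e_{2n−2}}` (1-based indices). -/
def Wplus (n : ℕ) : Submodule ℝ (Fin (2*n) → ℝ) := stdSpan n { i | i < 2*n - 2 }

/-- The image `M·V` of a subspace under `x ↦ Mx`. -/
def mapMat {n : ℕ} (M : Matrix (Fin (2*n)) (Fin (2*n)) ℝ)
    (V : Submodule ℝ (Fin (2*n) → ℝ)) : Submodule ℝ (Fin (2*n) → ℝ) :=
  V.map M.mulVecLin

/-- Two flags `(V,W)`, `(V′,W′)` of type (2,2n−2) are antipodal if `V ⊕ W′ = ℝ^{2n}`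
and `V′ ⊕ W = ℝ^{2n}`. -/
def AntipodalFlags {n : ℕ} (F F' :
    Submodule ℝ (Fin (2*n) → ℝ) × Submodule ℝ (Fin (2*n) → ℝ)) : Prop :=
  IsCompl F.1 F'.2 ∧ IsCompl F'.1 F.2

/-- The limit set `Λ ⊂ F_{2,2n−2}` of `ρ_n(SL(2,ℂ))`. -/
def LambdaFlag (n : ℕ) :
    Set (Submodule ℝ (Fin (2*n) → ℝ) × Submodule ℝ (Fin (2*n) → ℝ)) :=
  insert (Vplus n, Wplus n)
    { F | ∃ α β : ℝ, F = (mapMat (Mmat n α β) (Vminus n), mapMat (Mmat n α β) (Wminus n)) }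


-- ===================== auxiliary development =====================

lemma exp_nilp {N : ℕ} (A : Matrix (Fin N) (Fin N) ℝ) (K : ℕ) (hA : A ^ K = 0) :
    NormedSpace.exp A = ∑ k ∈ Finset.range K, (k.factorial : ℝ)⁻¹ • A ^ k := by
  rw [NormedSpace.exp_eq_tsum (𝕂 := ℝ)]
  refine tsum_eq_sum ?_
  intro k hk
  have hk' : K ≤ k := by simpa using hk
  have : A ^ k = 0 := by
    have := pow_add A K (k - K)
    rw [hA, zero_mul] at this
    rw [show k = K + (k - K) by omega, this]
  rw [this, smul_zero]

lemma sum_pair_blk {n : ℕ} (k : ℕ) (hk : k < n) (f : Fin (2*n) → ℝ)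
    (hf : ∀ c : Fin (2*n), (c:ℕ)/2 ≠ k → f c = 0) :
    ∑ c, f c = f ⟨2*k, by omega⟩ + f ⟨2*k+1, by omega⟩ := by
  rw [← Finset.sum_pair (a := (⟨2*k, by omega⟩ : Fin (2*n))) (b := ⟨2*k+1, by omega⟩)
    (by simp [Fin.ext_iff])]
  refine (Finset.sum_subset (Finset.subset_univ _) ?_).symm
  intro c _ hc
  refine hf c ?_
  simp [Fin.ext_iff] at hc
  omega

lemma blkSup_apply {n : ℕ} (B : ℕ → Matrix (Fin 2) (Fin 2) ℝ) (r c : Fin (2*n)) :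
    blkSup n B r c = if (c:ℕ)/2 = (r:ℕ)/2 + 1 then
      B ((r:ℕ)/2 + 1) ⟨(r:ℕ) % 2, by omega⟩ ⟨(c:ℕ) % 2, by omega⟩ else 0 := rfl

lemma smul_blkSup {n : ℕ} (a : ℝ) (B : ℕ → Matrix (Fin 2) (Fin 2) ℝ) :
    a • blkSup n B = blkSup n (fun k => a • B k) := by
  ext r c
  simp only [Matrix.smul_apply, blkSup_apply, smul_ite, smul_zero]

lemma add_blkSup {n : ℕ} (B C : ℕ → Matrix (Fin 2) (Fin 2) ℝ) :
    blkSup n B + blkSup n C = blkSup n (fun k => B k + C k) := by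
  ext r c
  simp only [Matrix.add_apply, blkSup_apply]
  split <;> simp

lemma blkSup_pow_support {n : ℕ} (B : ℕ → Matrix (Fin 2) (Fin 2) ℝ) (k : ℕ) :
    ∀ r c : Fin (2*n), (c:ℕ)/2 < (r:ℕ)/2 + k → ((blkSup n B) ^ k) r c = 0 := by
  induction k with
  | zero =>
    intro r c h
    have : r ≠ c := by intro e; subst e; omega
    simp [Matrix.one_apply, this]
  | succ k ih =>
    intro r c h
    rw [pow_succ, Matrix.mul_apply]
    refine Finset.sum_eq_zero fun d _ => ?_
    by_cases hd : (d:ℕ)/2 < (r:ℕ)/2 + k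
    · rw [ih r d hd, zero_mul]
    · have : ¬ ((c:ℕ)/2 = (d:ℕ)/2 + 1) := by omega
      rw [blkSup_apply, if_neg this, mul_zero]

lemma blkSup_pow_eq_zero {n : ℕ} (B : ℕ → Matrix (Fin 2) (Fin 2) ℝ) :
    (blkSup n B) ^ n = 0 := by
  ext r c
  refine blkSup_pow_support B n r c ?_
  have := c.isLt
  omega

def mulM (w : ℂ) : Matrix (Fin 2) (Fin 2) ℝ := !![w.re, -w.im; w.im, w.re]
def cjM (w : ℂ) : Matrix (Fin 2) (Fin 2) ℝ := !![w.re, w.im; w.im, -w.re]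

lemma mulM_mulM (w t : ℂ) : mulM w * mulM t = mulM (w * t) := by
  ext i j
  fin_cases i <;> fin_cases j <;>
    simp [mulM, Matrix.mul_apply, Fin.sum_univ_two, Complex.mul_re, Complex.mul_im] <;> ring

lemma mulM_cjM (w t : ℂ) : mulM w * cjM t = cjM (w * t) := by
  ext i j
  fin_cases i <;> fin_cases j <;>
    simp [mulM, cjM, Matrix.mul_apply, Fin.sum_univ_two, Complex.mul_re, Complex.mul_im] <;> ring

lemma cjM_mulM (w t : ℂ) : cjM w * mulM t = cjM (w * (starRingEnd ℂ) t) := by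
  ext i j
  fin_cases i <;> fin_cases j <;>
    simp [mulM, cjM, Matrix.mul_apply, Fin.sum_univ_two, Complex.mul_re, Complex.mul_im] <;> ring

def XBf (n : ℕ) : ℕ → Matrix (Fin 2) (Fin 2) ℝ := fun k =>
  if k < n/2 then cc n k • I2 else if k = n/2 then cc n (n/2) • Tm else -(cc n k) • I2
def YBf (n : ℕ) : ℕ → Matrix (Fin 2) (Fin 2) ℝ := fun k =>
  if k = n/2 then cc n (n/2) • Pm else cc n k • Rm

lemma nb_lt {n j : ℕ} (h : j < n/2) (α β : ℝ) :
    α • XBf n j + β • YBf n j = mulM (cc n j * ⟨α, β⟩) := by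
  ext i l
  fin_cases i <;> fin_cases l <;>
    simp [XBf, YBf, h, h.ne, mulM, I2, Rm, Complex.mul_re, Complex.mul_im] <;> ring

lemma nb_eq {n j : ℕ} (h : j = n/2) (α β : ℝ) :
    α • XBf n j + β • YBf n j = cjM (cc n j * ⟨α, β⟩) := by
  subst h
  ext i l
  fin_cases i <;> fin_cases l <;>
    simp [XBf, YBf, cjM, Tm, Pm, Complex.mul_re, Complex.mul_im] <;> ring

lemma nb_gt {n j : ℕ} (h : n/2 < j) (α β : ℝ) :
    α • XBf n j + β • YBf n j = mulM (cc n j * ⟨-α, β⟩) := by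
  ext i l
  fin_cases i <;> fin_cases l <;>
    simp [XBf, YBf, h.ne', (show ¬ j < n/2 by omega), mulM, I2, Rm, Complex.mul_re,
      Complex.mul_im] <;> ring

def Cprod (n k : ℕ) : ℝ := ∏ j ∈ Finset.range k, cc n (j+1)
def gC (n : ℕ) (z : ℂ) (k : ℕ) : ℂ := (-1)^(k - n/2) * ((Cprod n k : ℝ) : ℂ) * z^k

lemma g_succ_le {n k : ℕ} (h : k + 1 ≤ n/2) (z : ℂ) :
    gC n z (k+1) = gC n z k * (cc n (k+1) * z) := by
  simp only [gC, Cprod, Finset.prod_range_succ, (show k+1 - n/2 = 0 by omega),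
    (show k - n/2 = 0 by omega), pow_zero, pow_succ, Complex.ofReal_mul]
  ring

lemma g_succ_gt {n k : ℕ} (h : n/2 ≤ k) (z : ℂ) :
    gC n z (k+1) = gC n z k * (-(cc n (k+1)) * z) := by
  simp only [gC, Cprod, Finset.prod_range_succ, (show k+1 - n/2 = (k - n/2) + 1 by omega),
    pow_succ, Complex.ofReal_mul]
  ring

def ΦM (n : ℕ) (z : ℂ) (k : ℕ) : Matrix (Fin 2) (Fin 2) ℝ :=
  if k < n/2 then mulM (gC n z k) else cjM (gC n z k)

lemma step_blk (n : ℕ) (α β : ℝ) (k : ℕ) :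
    ΦM n ⟨α,β⟩ k * (α • XBf n (k+1) + β • YBf n (k+1)) = ΦM n ⟨α,β⟩ (k+1) := by
  rcases lt_trichotomy (k+1) (n/2) with h | h | h
  · rw [nb_lt h, ΦM, ΦM, if_pos (by omega), if_pos h, mulM_mulM, ← g_succ_le (by omega)]
  · rw [nb_eq h, ΦM, ΦM, if_pos (by omega), if_neg (by omega), mulM_cjM,
      ← g_succ_le (by omega)]
  · rw [nb_gt h, ΦM, ΦM, if_neg (by omega), if_neg (by omega), cjM_mulM,
      (show (starRingEnd ℂ) ((cc n (k+1) : ℝ) * ⟨-α, β⟩) = -(cc n (k+1)) * ⟨α, β⟩ by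
        simp [Complex.ext_iff]), ← g_succ_gt (by omega)]

lemma N_eq_blkSup (n : ℕ) (α β : ℝ) :
    α • Xeven n + β • Yeven n = blkSup n (fun j => α • XBf n j + β • YBf n j) := by
  rw [show Xeven n = blkSup n (XBf n) from rfl, show Yeven n = blkSup n (YBf n) from rfl,
    smul_blkSup, smul_blkSup, add_blkSup]

lemma mulM_one_apply (i j : Fin 2) : mulM 1 i j = if i = j then 1 else 0 := by
  fin_cases i <;> fin_cases j <;> simp [mulM]

lemma even_pow_entry (n : ℕ) (hn : 2 ≤ n) (α β : ℝ) (k : ℕ) (hk : k < n) :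
    ∀ (r c : Fin (2*n)) (hr : (r:ℕ) < 2),
    ((α • Xeven n + β • Yeven n) ^ k) r c =
      if (c:ℕ)/2 = k then ΦM n ⟨α, β⟩ k ⟨(r:ℕ), hr⟩ ⟨(c:ℕ)%2, by omega⟩ else 0 := by
  induction k with
  | zero =>
    intro r c hr
    have hΦ : ΦM n ⟨α,β⟩ 0 = mulM 1 := by
      rw [ΦM, if_pos (by omega : 0 < n/2)]
      norm_num [gC, Cprod]
    rw [pow_zero, hΦ, Matrix.one_apply]
    by_cases h : (c:ℕ)/2 = 0
    · rw [if_pos h, mulM_one_apply]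
      have hc : (c:ℕ) < 2 := by omega
      by_cases hrc : (r:ℕ) = (c:ℕ)
      · rw [if_pos (Fin.ext hrc), if_pos (by rw [Fin.mk.injEq]; omega)]
      · rw [if_neg (fun e => hrc (by rw [e])), if_neg (by rw [Fin.mk.injEq]; omega)]
    · rw [if_neg h, if_neg (by rw [Fin.ext_iff]; omega)]
  | succ k ih =>
    intro r c hr
    have hk' : k < n := by omega
    have h2k : 2*k+1 < 2*n := by omega
    rw [pow_succ, Matrix.mul_apply]
    rw [sum_pair_blk k hk' _ (fun d hd => by
      rw [ih hk' r d hr, if_neg hd, zero_mul])]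
    have hd0 : ((α • Xeven n + β • Yeven n) ^ k) r ⟨2*k, by omega⟩
        = ΦM n ⟨α, β⟩ k ⟨(r:ℕ), hr⟩ ⟨0, by omega⟩ := by
      rw [ih hk' r ⟨2*k, by omega⟩ hr]
      simp only [if_pos (show (2*k)/2 = k by omega)]
      congr 1
      rw [Fin.mk.injEq]; omega
    have hd1 : ((α • Xeven n + β • Yeven n) ^ k) r ⟨2*k+1, by omega⟩
        = ΦM n ⟨α, β⟩ k ⟨(r:ℕ), hr⟩ ⟨1, by omega⟩ := by
      rw [ih hk' r ⟨2*k+1, by omega⟩ hr]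
      simp only [if_pos (show (2*k+1)/2 = k by omega)]
      congr 1
      rw [Fin.mk.injEq]; omega
    rw [hd0, hd1, N_eq_blkSup]
    by_cases hc : (c:ℕ)/2 = k + 1
    · rw [if_pos hc]
      rw [blkSup_apply, blkSup_apply]
      simp only [(show ((⟨2*k, by omega⟩ : Fin (2*n)) : ℕ) = 2*k from rfl),
        (show ((⟨2*k+1, h2k⟩ : Fin (2*n)) : ℕ) = 2*k+1 from rfl)]
      rw [if_pos (by omega : (c:ℕ)/2 = (2*k)/2 + 1),
          if_pos (by omega : (c:ℕ)/2 = (2*k+1)/2 + 1)]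
      rw [← step_blk n α β k, Matrix.mul_apply, Fin.sum_univ_two]
      simp only [show (2*k)/2 = k from by omega, show (2*k+1)/2 = k from by omega,
        show (2*k)%2 = 0 from by omega, show (2*k+1)%2 = 1 from by omega,
        Fin.mk_zero, Fin.mk_one]
    · rw [if_neg hc, blkSup_apply, blkSup_apply]
      rw [if_neg (by simp only []; omega : ¬ ((c:ℕ)/2 = ((⟨2*k, by omega⟩ : Fin (2*n)):ℕ)/2 + 1)),
          if_neg (by simp only []; omega : ¬ ((c:ℕ)/2 = ((⟨2*k+1, h2k⟩ : Fin (2*n)):ℕ)/2 + 1))]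
      ring

def vC (n : ℕ) (u : Fin (2*n) → ℝ) (k : ℕ) : ℂ :=
  if h : k < n then ⟨u ⟨2*k, by omega⟩, u ⟨2*k+1, by omega⟩⟩ else 0

def wC (n : ℕ) (u : Fin (2*n) → ℝ) (k : ℕ) : ℂ :=
  if k < n/2 then vC n u k else (starRingEnd ℂ) (vC n u k)

def aC (n : ℕ) (u : Fin (2*n) → ℝ) (k : ℕ) : ℂ :=
  ((k.factorial : ℝ)⁻¹ : ℂ) * (-1)^(k - n/2) * ((Cprod n k : ℝ) : ℂ) * wC n u k

lemma sum_mulVec_apply {N : ℕ} {s : Finset ℕ} (A : ℕ → Matrix (Fin N) (Fin N) ℝ)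
    (u : Fin N → ℝ) (r : Fin N) :
    ((∑ k ∈ s, A k) *ᵥ u) r = ∑ k ∈ s, (A k *ᵥ u) r := by
  classical
  induction s using Finset.induction with
  | empty => simp
  | insert _ _ h ih => simp [Finset.sum_insert h, Matrix.add_mulVec, ih]

lemma even_exp_entry (n : ℕ) (hn : 2 ≤ n) (α β : ℝ) (u : Fin (2*n) → ℝ)
    (r : Fin (2*n)) (hr : (r:ℕ) < 2) :
    (NormedSpace.exp (α • Xeven n + β • Yeven n) *ᵥ u) r
      = if (r:ℕ) = 0 then (∑ k ∈ Finset.range n, aC n u k * (⟨α, β⟩:ℂ)^k).re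
        else (∑ k ∈ Finset.range n, aC n u k * (⟨α, β⟩:ℂ)^k).im := by
  have hnil : (α • Xeven n + β • Yeven n) ^ n = 0 := by
    rw [N_eq_blkSup]; exact blkSup_pow_eq_zero _
  rw [exp_nilp _ n hnil, sum_mulVec_apply]
  have hterm : ∀ k ∈ Finset.range n,
      (((k.factorial : ℝ)⁻¹ • (α • Xeven n + β • Yeven n) ^ k) *ᵥ u) r
        = if (r:ℕ) = 0 then (aC n u k * (⟨α, β⟩:ℂ)^k).re
          else (aC n u k * (⟨α, β⟩:ℂ)^k).im := by
    intro k hk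
    have hkn : k < n := Finset.mem_range.mp hk
    rw [Matrix.smul_mulVec, Pi.smul_apply, smul_eq_mul]
    have hmv : ((α • Xeven n + β • Yeven n) ^ k *ᵥ u) r
        = ΦM n ⟨α,β⟩ k ⟨(r:ℕ), hr⟩ 0 * u ⟨2*k, by omega⟩
          + ΦM n ⟨α,β⟩ k ⟨(r:ℕ), hr⟩ 1 * u ⟨2*k+1, by omega⟩ := by
      show ∑ c, ((α • Xeven n + β • Yeven n) ^ k) r c * u c = _
      rw [sum_pair_blk k hkn _ (fun d hd => by
        rw [even_pow_entry n hn α β k hkn r d hr, if_neg hd, zero_mul])]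
      rw [even_pow_entry n hn α β k hkn r ⟨2*k, by omega⟩ hr,
          even_pow_entry n hn α β k hkn r ⟨2*k+1, by omega⟩ hr]
      simp only [if_pos (show (2*k)/2 = k from by omega),
        if_pos (show (2*k+1)/2 = k from by omega),
        show (2*k)%2 = 0 from by omega, show (2*k+1)%2 = 1 from by omega,
        Fin.mk_zero, Fin.mk_one]
    rw [hmv]
    have hvre : u ⟨2*k, by omega⟩ = (vC n u k).re := by rw [vC, dif_pos hkn]
    have hvim : u ⟨2*k+1, by omega⟩ = (vC n u k).im := by rw [vC, dif_pos hkn]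
    have haC : aC n u k * (⟨α, β⟩:ℂ)^k = ((k.factorial : ℝ)⁻¹ : ℂ) * (gC n ⟨α,β⟩ k * wC n u k) := by
      rw [aC, gC]; ring
    rw [hvre, hvim, haC, ΦM, wC]
    rcases Nat.lt_or_ge (r:ℕ) 1 with hr0 | hr1
    · have e0 : (⟨(r:ℕ), hr⟩ : Fin 2) = 0 := by rw [Fin.ext_iff]; simp; omega
      rw [e0, if_pos (show (r:ℕ) = 0 by omega), ← Complex.ofReal_inv, Complex.re_ofReal_mul]
      congr 1
      by_cases hkm : k < n/2 <;>
        simp [hkm, mulM, cjM, Complex.mul_re, Complex.mul_im] <;> ring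
    · have e1 : (⟨(r:ℕ), hr⟩ : Fin 2) = 1 := by rw [Fin.ext_iff]; simp; omega
      rw [e1, if_neg (show ¬ (r:ℕ) = 0 by omega), ← Complex.ofReal_inv, Complex.im_ofReal_mul]
      congr 1
      by_cases hkm : k < n/2 <;>
        simp [hkm, mulM, cjM, Complex.mul_re, Complex.mul_im] <;> ring
  rw [Finset.sum_congr rfl hterm]
  by_cases h0 : (r:ℕ) = 0 <;> simp [h0, Complex.re_sum, Complex.im_sum]

lemma Cprod_ne_zero {n k : ℕ} (hk : k ≤ n - 1) (hn : 1 ≤ n) : Cprod n k ≠ 0 := by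
  rw [Cprod]
  refine Finset.prod_ne_zero_iff.mpr fun j hj => ?_
  have hj' : j + 1 ≤ n - 1 := by have := Finset.mem_range.mp hj; omega
  have : (0:ℝ) < cc n (j+1) := by
    rw [cc]
    refine Real.sqrt_pos.mpr ?_
    have h1 : (0:ℝ) < ((j+1 : ℕ) : ℝ) := by positivity
    have h2 : (0:ℝ) < ((n - (j+1) : ℕ) : ℝ) := by
      have : 1 ≤ n - (j+1) := by omega
      exact_mod_cast Nat.lt_of_lt_of_le Nat.zero_lt_one (by exact_mod_cast this)
    positivity
  exact this.ne'

lemma exists_root_even (n : ℕ) (hn : 2 ≤ n) (u : Fin (2*n) → ℝ)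
    (htop : vC n u (n-1) ≠ 0) :
    ∃ z : ℂ, ∑ k ∈ Finset.range n, aC n u k * z^k = 0 := by
  set p : Polynomial ℂ := ∑ k ∈ Finset.range n, Polynomial.C (aC n u k) * Polynomial.X ^ k with hp
  have hcoeff : p.coeff (n-1) = aC n u (n-1) := by
    rw [hp, Polynomial.finset_sum_coeff]
    rw [Finset.sum_eq_single (n-1)]
    · simp
    · intro b _ hb
      simp [Polynomial.coeff_C_mul, Polynomial.coeff_X_pow, (Ne.symm hb)]
    · intro h
      exact absurd (Finset.mem_range.mpr (by omega)) h
  have hane : aC n u (n-1) ≠ 0 := by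
    rw [aC, wC]
    have h1 : (((n-1).factorial : ℝ) : ℂ)⁻¹ ≠ 0 := by
      simp [Nat.factorial_ne_zero]
    have h2 : ((-1 : ℂ))^(n-1 - n/2) ≠ 0 := by
      simp
    have h3 : ((Cprod n (n-1) : ℝ) : ℂ) ≠ 0 := by
      exact_mod_cast Cprod_ne_zero (le_refl _) (by omega)
    have h4 : (if n-1 < n/2 then vC n u (n-1) else (starRingEnd ℂ) (vC n u (n-1))) ≠ 0 := by
      rw [if_neg (by omega)]
      simpa using htop
    exact mul_ne_zero (mul_ne_zero (mul_ne_zero (by exact_mod_cast h1) h2) h3) h4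
  have hdeg : 0 < p.degree := by
    have h1 : ((n-1 : ℕ) : WithBot ℕ) ≤ p.degree := Polynomial.le_degree_of_ne_zero (by
      rw [hcoeff]; exact hane)
    calc (0 : WithBot ℕ) < ((n-1 : ℕ) : WithBot ℕ) := by
          exact_mod_cast Nat.pos_of_ne_zero (by omega)
      _ ≤ p.degree := h1
  obtain ⟨z, hz⟩ := Complex.exists_root hdeg
  refine ⟨z, ?_⟩
  have := hz
  rw [Polynomial.IsRoot, hp] at this
  simpa [Polynomial.eval_finset_sum] using this

lemma evenCase_zero (n : ℕ) (hn : 2 ≤ n) (u : Fin (2*n) → ℝ) (htop : vC n u (n-1) ≠ 0) :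
    ∃ α β : ℝ,
      (NormedSpace.exp (α • Xeven n + β • Yeven n) *ᵥ u) ⟨0, by omega⟩ = 0
      ∧ (NormedSpace.exp (α • Xeven n + β • Yeven n) *ᵥ u) ⟨1, by omega⟩ = 0 := by
  obtain ⟨z, hz⟩ := exists_root_even n hn u htop
  have hzz : (⟨z.re, z.im⟩ : ℂ) = z := rfl
  refine ⟨z.re, z.im, ?_, ?_⟩
  · rw [even_exp_entry n hn z.re z.im u ⟨0, by omega⟩ (by simp)]
    rw [if_pos (by simp), hzz, hz]
    simp
  · rw [even_exp_entry n hn z.re z.im u ⟨1, by omega⟩ (by simp)]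
    rw [if_neg (by simp), hzz, hz]
    simp

def embIdx (n : ℕ) (d : Fin (2*(n-1))) : Fin (2*n) :=
  ⟨if (d:ℕ) < n-1 then (d:ℕ) else (d:ℕ)+2, by have := d.isLt; split_ifs <;> omega⟩

lemma embIdx_val (n : ℕ) (d : Fin (2*(n-1))) :
    (embIdx n d : ℕ) = if (d:ℕ) < n-1 then (d:ℕ) else (d:ℕ)+2 := rfl

lemma embIdx_spec (n : ℕ) (d : Fin (2*(n-1))) :
    ((embIdx n d : ℕ) < n-1 ∨ n+1 ≤ (embIdx n d : ℕ)) ∧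
    (if (embIdx n d : ℕ) < n-1 then (embIdx n d : ℕ) else (embIdx n d : ℕ) - 2) = (d:ℕ) := by
  have := d.isLt
  rw [embIdx_val]
  split_ifs <;> omega

lemma embMid_apply_emb {n : ℕ} (M : Matrix (Fin (2*(n-1))) (Fin (2*(n-1))) ℝ)
    (r c : Fin (2*(n-1))) :
    embMid n M (embIdx n r) (embIdx n c) = M r c := by
  obtain ⟨hr1, hr2⟩ := embIdx_spec n r
  obtain ⟨hc1, hc2⟩ := embIdx_spec n c
  rw [embMid, Matrix.of_apply, dif_pos ⟨hr1, hc1⟩]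
  congr 1 <;> rw [Fin.ext_iff] <;> simpa

lemma embMid_apply_zero_left {n : ℕ} (M : Matrix (Fin (2*(n-1))) (Fin (2*(n-1))) ℝ)
    (r c : Fin (2*n)) (h : ¬ ((r:ℕ) < n-1 ∨ n+1 ≤ (r:ℕ))) : embMid n M r c = 0 := by
  rw [embMid, Matrix.of_apply, dif_neg (by tauto)]

lemma embMid_apply_zero_right {n : ℕ} (M : Matrix (Fin (2*(n-1))) (Fin (2*(n-1))) ℝ)
    (r c : Fin (2*n)) (h : ¬ ((c:ℕ) < n-1 ∨ n+1 ≤ (c:ℕ))) : embMid n M r c = 0 := by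
  rw [embMid, Matrix.of_apply, dif_neg (by tauto)]

lemma sum_emb {n : ℕ} (hn : 3 ≤ n) (f : Fin (2*n) → ℝ)
    (h0 : ∀ c : Fin (2*n), ¬ ((c:ℕ) < n-1 ∨ n+1 ≤ (c:ℕ)) → f c = 0) :
    ∑ c, f c = ∑ d : Fin (2*(n-1)), f (embIdx n d) := by
  rw [← Finset.sum_subset (Finset.subset_univ
    (Finset.univ.filter (fun c : Fin (2*n) => (c:ℕ) < n-1 ∨ n+1 ≤ (c:ℕ))))
    (fun c _ hc => h0 c (by simpa using hc))]
  refine (Finset.sum_bij (fun (d : Fin (2*(n-1))) _ => embIdx n d) ?_ ?_ ?_ ?_).symm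
  · intro d _
    obtain ⟨h1, -⟩ := embIdx_spec n d
    simpa using h1
  · intro d1 _ d2 _ he
    have e1 := embIdx_val n d1
    have e2 := embIdx_val n d2
    rw [Fin.ext_iff] at he ⊢
    have := d1.isLt; have := d2.isLt
    rw [e1, e2] at he
    split_ifs at he <;> omega
  · intro c hc
    simp only [Finset.mem_filter, Finset.mem_univ, true_and] at hc
    have hclt := c.isLt
    refine ⟨⟨if (c:ℕ) < n-1 then (c:ℕ) else (c:ℕ) - 2, by split_ifs <;> omega⟩,
      Finset.mem_univ _, ?_⟩
    rw [Fin.ext_iff, embIdx_val]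
    simp only []
    split_ifs <;> omega
  · intro d _
    rfl

lemma exists_embIdx {n : ℕ} (c : Fin (2*n)) (hc : (c:ℕ) < n-1 ∨ n+1 ≤ (c:ℕ)) :
    ∃ c' : Fin (2*(n-1)), embIdx n c' = c := by
  have := c.isLt
  refine ⟨⟨if (c:ℕ) < n-1 then (c:ℕ) else (c:ℕ)-2, by split_ifs <;> omega⟩, ?_⟩
  rw [Fin.ext_iff, embIdx_val]
  simp only []
  split_ifs <;> omega

lemma emb_mul {n : ℕ} (hn : 3 ≤ n) (A B : Matrix (Fin (2*(n-1))) (Fin (2*(n-1))) ℝ) :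
    embMid n A * embMid n B = embMid n (A * B) := by
  ext r c
  rw [Matrix.mul_apply]
  by_cases hr : (r:ℕ) < n-1 ∨ n+1 ≤ (r:ℕ)
  · by_cases hc : (c:ℕ) < n-1 ∨ n+1 ≤ (c:ℕ)
    · obtain ⟨r', hr'⟩ := exists_embIdx r hr
      obtain ⟨c', hc'⟩ := exists_embIdx c hc
      subst hr' hc'
      rw [sum_emb hn _ (fun d hd => by
        rw [embMid_apply_zero_right A _ d hd, zero_mul])]
      rw [embMid_apply_emb, Matrix.mul_apply]
      exact Finset.sum_congr rfl fun d _ => by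
        rw [embMid_apply_emb, embMid_apply_emb]
    · rw [embMid_apply_zero_right _ _ _ hc]
      exact Finset.sum_eq_zero fun d _ => by
        rw [embMid_apply_zero_right B d c hc, mul_zero]
  · rw [embMid_apply_zero_left _ _ _ hr]
    exact Finset.sum_eq_zero fun d _ => by
      rw [embMid_apply_zero_left A r d hr, zero_mul]

lemma emb_pow {n : ℕ} (hn : 3 ≤ n) (B : Matrix (Fin (2*(n-1))) (Fin (2*(n-1))) ℝ)
    (k : ℕ) (hk : 1 ≤ k) : (embMid n B) ^ k = embMid n (B ^ k) := by
  induction k with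
  | zero => omega
  | succ k ih =>
    rcases Nat.eq_or_lt_of_le hk with h | h
    · rw [← h, pow_one, pow_one]
    · rw [pow_succ, ih (by omega), emb_mul hn, ← pow_succ]

lemma emb_zero {n : ℕ} : embMid n (0 : Matrix (Fin (2*(n-1))) (Fin (2*(n-1))) ℝ) = 0 := by
  ext r c
  rw [embMid, Matrix.of_apply]
  split <;> rfl

lemma emb_pow_mulVec_entry {n : ℕ} (hn : 3 ≤ n) (B : Matrix (Fin (2*(n-1))) (Fin (2*(n-1))) ℝ)
    (u : Fin (2*n) → ℝ) (k : ℕ) (r : ℕ) (hr : r < 2) :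
    ((embMid n B) ^ k *ᵥ u) ⟨r, by omega⟩
      = (B ^ k *ᵥ (fun d => u (embIdx n d))) ⟨r, by omega⟩ := by
  have hre : embIdx n ⟨r, by omega⟩ = ⟨r, by omega⟩ := by
    rw [Fin.ext_iff, embIdx_val]
    simp only []
    split_ifs <;> omega
  rcases Nat.eq_zero_or_pos k with h | h
  · subst h
    rw [pow_zero, pow_zero, Matrix.one_mulVec, Matrix.one_mulVec]
    rw [← hre]
  · rw [emb_pow hn B k h]
    show ∑ c, embMid n (B^k) ⟨r, by omega⟩ c * u c = _
    rw [sum_emb hn _ (fun d hd => by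
      rw [embMid_apply_zero_right _ _ d hd, zero_mul])]
    rw [Matrix.mulVec, dotProduct]
    refine Finset.sum_congr rfl fun d _ => ?_
    rw [← hre, embMid_apply_emb]

lemma emb_exp_entry {n : ℕ} (hn : 3 ≤ n) (B : Matrix (Fin (2*(n-1))) (Fin (2*(n-1))) ℝ)
    (hB : B ^ (n-1) = 0) (u : Fin (2*n) → ℝ) (r : ℕ) (hr : r < 2) :
    (NormedSpace.exp (embMid n B) *ᵥ u) ⟨r, by omega⟩
      = (NormedSpace.exp B *ᵥ (fun d => u (embIdx n d))) ⟨r, by omega⟩ := by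
  have hnil : (embMid n B) ^ (n-1) = 0 := by
    rw [emb_pow hn B (n-1) (by omega), hB, emb_zero]
  rw [exp_nilp _ _ hnil, exp_nilp _ _ hB, sum_mulVec_apply, sum_mulVec_apply]
  refine Finset.sum_congr rfl fun k _ => ?_
  rw [Matrix.smul_mulVec, Matrix.smul_mulVec, Pi.smul_apply, Pi.smul_apply,
    emb_pow_mulVec_entry hn B u k r hr]

lemma emb_smul {n : ℕ} (a : ℝ) (M : Matrix (Fin (2*(n-1))) (Fin (2*(n-1))) ℝ) :
    a • embMid n M = embMid n (a • M) := by
  ext r c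
  rw [Matrix.smul_apply, embMid, embMid, Matrix.of_apply, Matrix.of_apply]
  split <;> simp

lemma emb_add {n : ℕ} (A B : Matrix (Fin (2*(n-1))) (Fin (2*(n-1))) ℝ) :
    embMid n A + embMid n B = embMid n (A + B) := by
  ext r c
  rw [Matrix.add_apply, embMid, embMid, embMid, Matrix.of_apply, Matrix.of_apply,
    Matrix.of_apply]
  split <;> simp

lemma main_zero (n : ℕ) (hn : 2 ≤ n) (u : Fin (2*n) → ℝ)
    (htop : ¬ (u ⟨2*n-2, by omega⟩ = 0 ∧ u ⟨2*n-1, by omega⟩ = 0)) :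
    ∃ α β : ℝ, (NormedSpace.exp (α • Xmat n + β • Ymat n) *ᵥ u) ⟨0, by omega⟩ = 0
      ∧ (NormedSpace.exp (α • Xmat n + β • Ymat n) *ᵥ u) ⟨1, by omega⟩ = 0 := by
  by_cases he : Even n
  · rw [Xmat, if_pos he, Ymat, if_pos he]
    have htop' : vC n u (n-1) ≠ 0 := by
      rw [vC, dif_pos (by omega : n-1 < n)]
      intro hz
      refine htop ⟨?_, ?_⟩
      · have := congrArg Complex.re hz
        simpa [show (⟨2*(n-1), by omega⟩ : Fin (2*n)) = ⟨2*n-2, by omega⟩ from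
          Fin.ext (by simp; omega)] using this
      · have := congrArg Complex.im hz
        simpa [show (⟨2*(n-1)+1, by omega⟩ : Fin (2*n)) = ⟨2*n-1, by omega⟩ from
          Fin.ext (by simp; omega)] using this
    exact evenCase_zero n hn u htop'
  · have h3 : 3 ≤ n := by
      rcases Nat.even_or_odd n with h | h
      · exact absurd h he
      · rcases h with ⟨m, hm⟩; omega
    have e1 : embIdx n ⟨2*(n-1-1), by omega⟩ = ⟨2*n-2, by omega⟩ := by
      rw [Fin.ext_iff, embIdx_val]; simp only []; split_ifs <;> omega
    have e2 : embIdx n ⟨2*(n-1-1)+1, by omega⟩ = ⟨2*n-1, by omega⟩ := by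
      rw [Fin.ext_iff, embIdx_val]; simp only []; split_ifs <;> omega
    have htop' : vC (n-1) (fun d => u (embIdx n d)) (n-1-1) ≠ 0 := by
      rw [vC, dif_pos (by omega : n-1-1 < n-1)]
      intro hz
      refine htop ⟨?_, ?_⟩
      · have := congrArg Complex.re hz
        simpa [e1] using this
      · have := congrArg Complex.im hz
        simpa [e2] using this
    obtain ⟨α, β, h0, h1⟩ := evenCase_zero (n-1) (by omega) (fun d => u (embIdx n d)) htop'
    have hX : α • Xmat n + β • Ymat n = embMid n (α • Xeven (n-1) + β • Yeven (n-1)) := by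
      rw [Xmat, if_neg he, Ymat, if_neg he, emb_smul, emb_smul, emb_add]
    have hB : (α • Xeven (n-1) + β • Yeven (n-1)) ^ (n-1) = 0 := by
      rw [N_eq_blkSup]; exact blkSup_pow_eq_zero _
    refine ⟨α, β, ?_, ?_⟩
    · rw [hX, emb_exp_entry h3 _ hB u 0 (by omega)]
      exact h0
    · rw [hX, emb_exp_entry h3 _ hB u 1 (by omega)]
      exact h1

lemma mem_stdSpan {n : ℕ} (s : Set ℕ) (x : Fin (2*n) → ℝ)
    (h : ∀ i : Fin (2*n), (i:ℕ) ∉ s → x i = 0) : x ∈ stdSpan n s := by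
  have hx : x = ∑ i : Fin (2*n), x i • (Pi.single i 1 : Fin (2*n) → ℝ) := by
    ext j
    rw [Finset.sum_apply]
    simp [Pi.single_apply]
  rw [hx]
  refine Submodule.sum_mem _ fun i _ => ?_
  by_cases hi : (i:ℕ) ∈ s
  · exact Submodule.smul_mem _ _ (Submodule.subset_span ⟨i, hi, rfl⟩)
  · rw [h i hi, zero_smul]
    exact Submodule.zero_mem _

lemma Mmat_inv (n : ℕ) (α β : ℝ) : Mmat n (-α) (-β) * Mmat n α β = 1 := by
  rw [Mmat, Mmat]
  have hA : (-α) • Xmat n + (-β) • Ymat n = -(α • Xmat n + β • Ymat n) := by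
    rw [neg_smul, neg_smul]; abel
  rw [hA, ← Matrix.exp_add_of_commute (-(α • Xmat n + β • Ymat n)) (α • Xmat n + β • Ymat n) (Commute.neg_left (Commute.refl _)),
    neg_add_cancel, NormedSpace.exp_zero]

lemma key (n : ℕ) (hn : 2 ≤ n) (u : Fin (2*n) → ℝ) :
    u ∈ Wplus n ∨ ∃ α β : ℝ, u ∈ mapMat (Mmat n α β) (Wminus n) := by
  by_cases htop : u ⟨2*n-2, by omega⟩ = 0 ∧ u ⟨2*n-1, by omega⟩ = 0
  · left
    refine mem_stdSpan _ _ fun i hi => ?_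
    have hi' : (i:ℕ) = 2*n-2 ∨ (i:ℕ) = 2*n-1 := by
      have := i.isLt
      simp only [Set.mem_setOf_eq, not_lt] at hi
      omega
    rcases hi' with h | h
    · rw [show i = ⟨2*n-2, by omega⟩ from Fin.ext h]; exact htop.1
    · rw [show i = ⟨2*n-1, by omega⟩ from Fin.ext h]; exact htop.2
  · right
    obtain ⟨α, β, h0, h1⟩ := main_zero n hn u htop
    refine ⟨-α, -β, Submodule.mem_map.mpr
      ⟨NormedSpace.exp (α • Xmat n + β • Ymat n) *ᵥ u, ?_, ?_⟩⟩
    · refine mem_stdSpan _ _ fun i hi => ?_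
      have hi' : (i:ℕ) = 0 ∨ (i:ℕ) = 1 := by
        simp only [Set.mem_setOf_eq, not_le] at hi
        omega
      rcases hi' with h | h
      · rw [show i = ⟨0, by omega⟩ from Fin.ext h]; exact h0
      · rw [show i = ⟨1, by omega⟩ from Fin.ext h]; exact h1
    · rw [Matrix.mulVecLin_apply, Matrix.mulVec_mulVec]
      have : Mmat n (-α) (-β) * NormedSpace.exp (α • Xmat n + β • Ymat n) = 1 :=
        Mmat_inv n α β
      rw [this, Matrix.one_mulVec]

/-- `Λ` is a maximally antipodal subset of the space of flags of type (2,2n−2): every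
flag of type (2,2n−2) fails to be antipodal to some member of `Λ`. -/
theorem lambda_is_maximally_antipodal (n : ℕ) (hn : 2 ≤ n)
    (V W : Submodule ℝ (Fin (2*n) → ℝ))
    (hV : Module.finrank ℝ V = 2) (hW : Module.finrank ℝ W = 2*n - 2) (hVW : V ≤ W) :
    ∃ F ∈ LambdaFlag n, ¬ IsCompl V F.2 ∨ ¬ IsCompl F.1 W := by
  have hVne : V ≠ ⊥ := by
    intro h
    rw [h] at hV
    simp at hV
  obtain ⟨u, huV, hune⟩ := Submodule.exists_mem_ne_zero_of_ne_bot hVne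
  rcases key n hn u with h | ⟨α, β, h⟩
  · refine ⟨(Vplus n, Wplus n), Set.mem_insert _ _, Or.inl fun hc => hune ?_⟩
    exact (Submodule.mem_bot ℝ).mp (hc.disjoint.le_bot (Submodule.mem_inf.mpr ⟨huV, h⟩))
  · refine ⟨(mapMat (Mmat n α β) (Vminus n), mapMat (Mmat n α β) (Wminus n)),
      Set.mem_insert_of_mem _ ⟨α, β, rfl⟩, Or.inl fun hc => hune ?_⟩
    exact (Submodule.mem_bot ℝ).mp (hc.disjoint.le_bot (Submodule.mem_inf.mpr ⟨huV, h⟩))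

end
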